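/- arXiv:2001.10652 — 2 statements merged into one kernel-verified Lean document; each statement's English description precedes it below -/
import Mathlib

section
/- Let v : Y → ℝ assign a real value to each outcome, and fix two treatment values t₁, t₀ ∈ T. Assume overlap for both: for every c ∈ C, Σ_{a} pA(a)·kT(a,c,t₁) > 0 and Σ_{a} pA(a)·kT(a,c,t₀) > 0. Then the average treatment effect is identified by adjusting for the confounding factors alone: Σ_{y} v(y)·P(y | do(t₁)) − Σ_{y} v(y)·P(y | do(t₀)) = Σ_{c ∈ C} pC(c)·( E[v | T=t₁, Z_c=c] − E[v | T=t₀, Z_c=c] ), where E[v | T=t, Z_c=c] := (Σ_{a,r,y} v(y)·pA(a)·pR(r)·kT(a,c,t)·kY(t,c,r,y)) / (Σ_{a} pA(a)·kT(a,c,t)). -/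
/-!
Under `do(t)` the instrument `a` is drawn from `pA` independently of everything else, so it
marginalises out and the interventional mean of `v` is the `pC`-average of the stratum means
`∑ r, ∑ y, v y * pR r * kY t c r y`. In the observational conditional given `T = t, Z_c = c`,
the treatment mechanism contributes the factor `∑ a, pA a * kT a c t` to the numerator, which
the overlap assumption allows to cancel against the denominator, leaving that same stratum mean.
-/

open Finset

def stratumMean {R T C Y K : Type*} [Fintype R] [Fintype Y] [CommSemiring K]
    (pR : R → K) (kY : T → C → R → Y → K) (v : Y → K) (t : T) (c : C) : K :=
  ∑ r, ∑ y, v y * pR r * kY t c r y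

theorem interventional_mean_eq_sum_stratumMean {A C R T Y K : Type*}
    [Fintype A] [Fintype C] [Fintype R] [Fintype Y] [CommSemiring K]
    (pA : A → K) (pC : C → K) (pR : R → K) (kY : T → C → R → Y → K) (v : Y → K) (t : T)
    (hpAsum : ∑ a, pA a = 1) :
    ∑ y, v y * ∑ a, ∑ c, ∑ r, pA a * pC c * pR r * kY t c r y =
      ∑ c, pC c * stratumMean pR kY v t c := by
  have marginalise_A : ∀ y, ∑ a, ∑ c, ∑ r, pA a * pC c * pR r * kY t c r y =
      ∑ c, ∑ r, pC c * (pR r * kY t c r y) := by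
    intro y
    simp_rw [mul_assoc, ← mul_sum, ← sum_mul, hpAsum, one_mul]
  simp only [marginalise_A, stratumMean, mul_sum]
  rw [sum_comm]
  refine sum_congr rfl fun c _ => ?_
  rw [sum_comm]
  exact sum_congr rfl fun r _ => sum_congr rfl fun y _ => by ring

theorem conditional_mean_eq_stratumMean {A C R T Y K : Type*}
    [Fintype A] [Fintype R] [Fintype Y] [Field K]
    (pA : A → K) (pR : R → K) (kT : A → C → T → K) (kY : T → C → R → Y → K) (v : Y → K)
    (t : T) (c : C) (hoverlap : ∑ a, pA a * kT a c t ≠ 0) :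
    (∑ a, ∑ r, ∑ y, v y * pA a * pR r * kT a c t * kY t c r y) / ∑ a, pA a * kT a c t =
      stratumMean pR kY v t c := by
  have factor_treatment : ∑ a, ∑ r, ∑ y, v y * pA a * pR r * kT a c t * kY t c r y =
      (∑ a, pA a * kT a c t) * stratumMean pR kY v t c := by
    rw [stratumMean, sum_mul]
    refine sum_congr rfl fun a _ => ?_
    simp only [mul_sum]
    exact sum_congr rfl fun r _ => sum_congr rfl fun y _ => by ring
  rw [factor_treatment, mul_div_cancel_left₀ _ hoverlap]

theorem tedvae_ate_identified_general
    (A C R T Y : Type) [Fintype A] [Fintype C] [Fintype R] [Fintype Y]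
    (pA : A → ℝ) (pC : C → ℝ) (pR : R → ℝ)
    (kT : A → C → T → ℝ) (kY : T → C → R → Y → ℝ)
    (hpAsum : ∑ a, pA a = 1)
    (v : Y → ℝ) (t₁ t₀ : T)
    (hoverlap₁ : ∀ c, 0 < ∑ a, pA a * kT a c t₁)
    (hoverlap₀ : ∀ c, 0 < ∑ a, pA a * kT a c t₀) :
    (∑ y, v y * ∑ a, ∑ c, ∑ r, pA a * pC c * pR r * kY t₁ c r y) -
      (∑ y, v y * ∑ a, ∑ c, ∑ r, pA a * pC c * pR r * kY t₀ c r y) =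
    ∑ c, pC c *
      ((∑ a, ∑ r, ∑ y, v y * pA a * pR r * kT a c t₁ * kY t₁ c r y) /
          (∑ a, pA a * kT a c t₁) -
        (∑ a, ∑ r, ∑ y, v y * pA a * pR r * kT a c t₀ * kY t₀ c r y) /
          (∑ a, pA a * kT a c t₀)) := by
  simp only [interventional_mean_eq_sum_stratumMean pA pC pR kY v _ hpAsum,
    conditional_mean_eq_stratumMean pA pR kT kY v _ _ (hoverlap₁ _).ne',
    conditional_mean_eq_stratumMean pA pR kT kY v _ _ (hoverlap₀ _).ne', mul_sub, sum_sub_distrib]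

/-- Identification of the average treatment effect by adjusting for the
confounding factors alone (Theorem 1 of TEDVAE, in expectation form). -/
theorem tedvae_ate_identified
    (A C R T Y : Type) [Fintype A] [Fintype C] [Fintype R] [Fintype T] [Fintype Y]
    [Nonempty A] [Nonempty C] [Nonempty R] [Nonempty T] [Nonempty Y]
    (pA : A → ℝ) (pC : C → ℝ) (pR : R → ℝ)
    (kT : A → C → T → ℝ) (kY : T → C → R → Y → ℝ)
    (hpA : ∀ a, 0 ≤ pA a) (hpAsum : ∑ a, pA a = 1)
    (hpC : ∀ c, 0 ≤ pC c) (hpCsum : ∑ c, pC c = 1)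
    (hpR : ∀ r, 0 ≤ pR r) (hpRsum : ∑ r, pR r = 1)
    (hkT : ∀ a c t, 0 ≤ kT a c t) (hkTsum : ∀ a c, ∑ t, kT a c t = 1)
    (hkY : ∀ t c r y, 0 ≤ kY t c r y) (hkYsum : ∀ t c r, ∑ y, kY t c r y = 1)
    (P : A → C → R → T → Y → ℝ)
    (hP : ∀ a c r t y, P a c r t y = pA a * pC c * pR r * kT a c t * kY t c r y)
    (v : Y → ℝ) (t₁ t₀ : T)
    (hoverlap₁ : ∀ c, 0 < ∑ a, pA a * kT a c t₁)
    (hoverlap₀ : ∀ c, 0 < ∑ a, pA a * kT a c t₀) :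
    (∑ y, v y * ∑ a, ∑ c, ∑ r, pA a * pC c * pR r * kY t₁ c r y) -
      (∑ y, v y * ∑ a, ∑ c, ∑ r, pA a * pC c * pR r * kY t₀ c r y) =
    ∑ c, pC c *
      ((∑ a, ∑ r, ∑ y, v y * pA a * pR r * kT a c t₁ * kY t₁ c r y) /
          (∑ a, pA a * kT a c t₁) -
        (∑ a, ∑ r, ∑ y, v y * pA a * pR r * kT a c t₀ * kY t₀ c r y) /
          (∑ a, pA a * kT a c t₀)) :=
  tedvae_ate_identified_general A C R T Y pA pC pR kT kY hpAsum v t₁ t₀ hoverlap₁ hoverlap₀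
end

section
/- Let v : Y → ℝ assign a real value to each outcome, fix two treatment values t₁, t₀ ∈ T and latent values c ∈ C, r ∈ R, and assume pC(c) > 0, pR(r) > 0, Σ_{a} pA(a)·kT(a,c,t₁) > 0, and Σ_{a} pA(a)·kT(a,c,t₀) > 0. Then the conditional average treatment effect given the confounding and risk factors is identified from the observational distribution: E[v | T=t₁, Z_c=c, Z_y=r] − E[v | T=t₀, Z_c=c, Z_y=r] = Σ_{y ∈ Y} v(y)·( kY(t₁,c,r,y) − kY(t₀,c,r,y) ), where E[v | T=t, Z_c=c, Z_y=r] := (Σ_{a,y} v(y)·pA(a)·kT(a,c,t)·kY(t,c,r,y)) / (Σ_{a} pA(a)·kT(a,c,t)), and the right-hand side is the interventional contrast E[v | do(t₁), z_c=c, z_y=r] − E[v | do(t₀), z_c=c, z_y=r]. -/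
/-! Since the outcome kernel does not depend on the instrumental factor, the observational numerator
factors as `(∑ a, pA a * kT a c t) * (∑ y, v y * kY t c r y)`, and the overlap assumption lets the
propensity mass `∑ a, pA a * kT a c t` cancel, leaving the interventional mean. -/

theorem Finset.sum_sum_mul_div_sum_left {α β 𝕜 : Type*} [Field 𝕜] (s : Finset α) (t : Finset β)
    (w : α → 𝕜) (g : β → 𝕜) (hw : ∑ a ∈ s, w a ≠ 0) :
    (∑ a ∈ s, ∑ y ∈ t, w a * g y) / ∑ a ∈ s, w a = ∑ y ∈ t, g y := by
  rw [← Finset.sum_mul_sum, mul_div_cancel_left₀ _ hw]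

theorem tedvae_cate_contrast_identified_general
    (A C R T Y : Type) [Fintype A] [Fintype Y]
    (pA : A → ℝ)
    (kT : A → C → T → ℝ) (kY : T → C → R → Y → ℝ)
    (v : Y → ℝ) (t₁ t₀ : T) (c : C) (r : R)
    (hoverlap₁ : 0 < ∑ a, pA a * kT a c t₁)
    (hoverlap₀ : 0 < ∑ a, pA a * kT a c t₀) :
    (∑ a, ∑ y, v y * pA a * kT a c t₁ * kY t₁ c r y) /
        (∑ a, pA a * kT a c t₁) -
      (∑ a, ∑ y, v y * pA a * kT a c t₀ * kY t₀ c r y) /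
        (∑ a, pA a * kT a c t₀) =
    ∑ y, v y * (kY t₁ c r y - kY t₀ c r y) := by
  have conditional_mean_eq_interventional_mean (t : T) (hoverlap : 0 < ∑ a, pA a * kT a c t) :
      (∑ a, ∑ y, v y * pA a * kT a c t * kY t c r y) / (∑ a, pA a * kT a c t) =
        ∑ y, v y * kY t c r y := by
    rw [← Finset.sum_sum_mul_div_sum_left Finset.univ Finset.univ _ (fun y => v y * kY t c r y)
      hoverlap.ne']
    congr 1
    exact Finset.sum_congr rfl fun a _ => Finset.sum_congr rfl fun y _ => by ring
  rw [conditional_mean_eq_interventional_mean t₁ hoverlap₁,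
    conditional_mean_eq_interventional_mean t₀ hoverlap₀, ← Finset.sum_sub_distrib]
  simp only [mul_sub]

/-- Identification of the conditional average treatment effect given the
confounding and risk factors (Theorem 2 of TEDVAE, in expectation form). -/
theorem tedvae_cate_contrast_identified
    (A C R T Y : Type) [Fintype A] [Fintype C] [Fintype R] [Fintype T] [Fintype Y]
    [Nonempty A] [Nonempty C] [Nonempty R] [Nonempty T] [Nonempty Y]
    (pA : A → ℝ) (pC : C → ℝ) (pR : R → ℝ)
    (kT : A → C → T → ℝ) (kY : T → C → R → Y → ℝ)
    (hpA : ∀ a, 0 ≤ pA a) (hpAsum : ∑ a, pA a = 1)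
    (hpC : ∀ c, 0 ≤ pC c) (hpCsum : ∑ c, pC c = 1)
    (hpR : ∀ r, 0 ≤ pR r) (hpRsum : ∑ r, pR r = 1)
    (hkT : ∀ a c t, 0 ≤ kT a c t) (hkTsum : ∀ a c, ∑ t, kT a c t = 1)
    (hkY : ∀ t c r y, 0 ≤ kY t c r y) (hkYsum : ∀ t c r, ∑ y, kY t c r y = 1)
    (P : A → C → R → T → Y → ℝ)
    (hP : ∀ a c r t y, P a c r t y = pA a * pC c * pR r * kT a c t * kY t c r y)
    (v : Y → ℝ) (t₁ t₀ : T) (c : C) (r : R)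
    (hc : 0 < pC c) (hr : 0 < pR r)
    (hoverlap₁ : 0 < ∑ a, pA a * kT a c t₁)
    (hoverlap₀ : 0 < ∑ a, pA a * kT a c t₀) :
    (∑ a, ∑ y, v y * pA a * kT a c t₁ * kY t₁ c r y) /
        (∑ a, pA a * kT a c t₁) -
      (∑ a, ∑ y, v y * pA a * kT a c t₀ * kY t₀ c r y) /
        (∑ a, pA a * kT a c t₀) =
    ∑ y, v y * (kY t₁ c r y - kY t₀ c r y) :=
  tedvae_cate_contrast_identified_general A C R T Y pA kT kY v t₁ t₀ c r hoverlap₁ hoverlap₀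
end
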